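/- Let H' be an m×(2^m−1) matrix over F_2 whose columns are all nonzero vectors of F_2^m, with kernel D' ⊆ F_2^n (n = 2^m−1), a perfect independent dominating set of Q_n. Then the set D = { (x, y, j) ∈ F_2^n × F_2^n × F_2 : x ∈ F_2^n, y ∈ D' + x, j = Σ y_i } is a linear subspace of F_2^{2n+1} and a perfect independent dominating set of Q_{2n+1}. -/

import Mathlib

def Q (n : ℕ) : SimpleGraph (Fin n → ZMod 2) where
  Adj x y := hammingDist x y = 1
  symm := ⟨fun x y h => by simpa [hammingDist_comm] using h⟩
  loopless := ⟨fun x h => by simp [hammingDist_self] at h⟩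

/-- A perfect independent dominating set: an independent set such that every vertex
outside of it is adjacent to exactly one of its vertices. -/
def IsPID {V : Type*} (G : SimpleGraph V) (D : Set V) : Prop :=
  (∀ u ∈ D, ∀ v ∈ D, ¬ G.Adj u v) ∧ ∀ v ∉ D, ∃! u, u ∈ D ∧ G.Adj v u

open Finset

lemma hd_card {k : ℕ} (u v : Fin k → ZMod 2) :
    hammingDist u v = (univ.filter fun i => u i ≠ v i).card := rfl

lemma hd_append {p q : ℕ} (a c : Fin p → ZMod 2) (b d : Fin q → ZMod 2) :
    hammingDist (Fin.append a b) (Fin.append c d) = hammingDist a c + hammingDist b d := by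
  simp only [hd_card, card_filter]
  rw [Fin.sum_univ_add]
  congr 1
  · exact Finset.sum_congr rfl (fun i _ => by rw [Fin.append_left, Fin.append_left])
  · exact Finset.sum_congr rfl (fun i _ => by rw [Fin.append_right, Fin.append_right])

lemma hd_one_iff {k : ℕ} (u v : Fin k → ZMod 2) :
    hammingDist u v = 1 ↔ ∃ i, v = u + Pi.single i 1 := by
  have key : ∀ a b : ZMod 2, a ≠ b ↔ b = a + 1 := by decide
  rw [hd_card, Finset.card_eq_one]
  constructor
  · rintro ⟨i, hi⟩
    refine ⟨i, funext fun j => ?_⟩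
    have hmem : ∀ j, j ∈ (univ.filter fun i => u i ≠ v i) ↔ j = i := by
      intro j; rw [hi]; simp
    by_cases hji : j = i
    · subst hji
      have : u j ≠ v j := by have := (hmem j).2 rfl; simpa using this
      simp [Pi.single_apply, (key _ _).1 this]
    · have : ¬ (u j ≠ v j) := fun h => hji ((hmem j).1 (by simp [h]))
      push_neg at this
      simp [Pi.single_apply, hji, this]
  · rintro ⟨i, rfl⟩
    refine ⟨i, ?_⟩
    ext j
    simp only [mem_filter, mem_univ, true_and, mem_singleton, Pi.add_apply]
    by_cases hji : j = i
    · subst hji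
      have h2 : ∀ a : ZMod 2, a ≠ a + 1 := by decide
      simp [Pi.single_apply, h2]
    · have : u j = u j + (Pi.single i 1 : Fin k → ZMod 2) j := by simp [Pi.single_apply, hji]
      simp [← this, hji]

lemma adjQ {k : ℕ} (u v : Fin k → ZMod 2) :
    (Q k).Adj u v ↔ ∃ i, v = u + Pi.single i 1 := hd_one_iff u v

def pA {n : ℕ} (z : Fin (n + n + 1) → ZMod 2) : Fin n → ZMod 2 :=
  fun i => z (Fin.castAdd 1 (Fin.castAdd n i))

def pB {n : ℕ} (z : Fin (n + n + 1) → ZMod 2) : Fin n → ZMod 2 :=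
  fun i => z (Fin.castAdd 1 (Fin.natAdd n i))

def pC {n : ℕ} (z : Fin (n + n + 1) → ZMod 2) : ZMod 2 :=
  z (Fin.natAdd (n + n) 0)

lemma pA_append {n : ℕ} (x y : Fin n → ZMod 2) (f : Fin 1 → ZMod 2) :
    pA (Fin.append (Fin.append x y) f) = x := by
  funext i; simp [pA, Fin.append_left]

lemma pB_append {n : ℕ} (x y : Fin n → ZMod 2) (f : Fin 1 → ZMod 2) :
    pB (Fin.append (Fin.append x y) f) = y := by
  funext i
  show Fin.append (Fin.append x y) f (Fin.castAdd 1 (Fin.natAdd n i)) = y i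
  rw [Fin.append_left, Fin.append_right]

lemma pC_append {n : ℕ} (x y : Fin n → ZMod 2) (f : Fin 1 → ZMod 2) :
    pC (Fin.append (Fin.append x y) f) = f 0 := by
  show Fin.append (Fin.append x y) f (Fin.natAdd (n + n) 0) = f 0
  rw [Fin.append_right]

lemma decomp {n : ℕ} (z : Fin (n + n + 1) → ZMod 2) :
    z = Fin.append (Fin.append (pA z) (pB z)) (fun _ : Fin 1 => pC z) := by
  funext i
  refine Fin.addCases (fun i => ?_) (fun i => ?_) i
  · refine Fin.addCases (fun i => ?_) (fun i => ?_) i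
    · rw [Fin.append_left, Fin.append_left]; rfl
    · rw [Fin.append_left, Fin.append_right]; rfl
  · rw [Fin.append_right]
    have : i = 0 := Subsingleton.elim _ _
    subst this; rfl

lemma eq_of_parts {n : ℕ} (z u : Fin (n + n + 1) → ZMod 2)
    (hA : pA u = pA z) (hB : pB u = pB z) (hC : pC u = pC z) : u = z := by
  calc u = Fin.append (Fin.append (pA u) (pB u)) (fun _ : Fin 1 => pC u) := decomp u
    _ = Fin.append (Fin.append (pA z) (pB z)) (fun _ : Fin 1 => pC z) := by rw [hA, hB, hC]
    _ = z := (decomp z).symm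

lemma hdC0 : ∀ a b : ZMod 2,
    (hammingDist (fun _ : Fin 1 => a) (fun _ : Fin 1 => b) = 0 ↔ b = a) := by decide

lemma hdC1 : ∀ a b : ZMod 2,
    (hammingDist (fun _ : Fin 1 => a) (fun _ : Fin 1 => b) = 1 ↔ b = a + 1) := by decide

lemma adj3 {n : ℕ} (z u : Fin (n + n + 1) → ZMod 2) :
    (Q (n + n + 1)).Adj z u ↔
      ((∃ i, pA u = pA z + Pi.single i 1) ∧ pB z = pB u ∧ pC u = pC z) ∨
      (pA z = pA u ∧ (∃ i, pB u = pB z + Pi.single i 1) ∧ pC u = pC z) ∨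
      (pA z = pA u ∧ pB z = pB u ∧ pC u = pC z + 1) := by
  have key : hammingDist z u = hammingDist (pA z) (pA u) + hammingDist (pB z) (pB u)
      + hammingDist (fun _ : Fin 1 => pC z) (fun _ : Fin 1 => pC u) := by
    conv_lhs => rw [decomp z, decomp u]
    rw [hd_append, hd_append]
  show hammingDist z u = 1 ↔ _
  rw [key]
  have h01 : ∀ a b c : ℕ, a + b + c = 1 ↔
      (a = 1 ∧ b = 0 ∧ c = 0) ∨ (a = 0 ∧ b = 1 ∧ c = 0) ∨ (a = 0 ∧ b = 0 ∧ c = 1) := by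
    intro a b c; omega
  rw [h01]
  have funC : ∀ a b : ZMod 2, ((fun _ : Fin 1 => a) = fun _ : Fin 1 => b) ↔ b = a := by decide
  have singleC : ∀ a b : ZMod 2,
      ((∃ i : Fin 1, (fun _ : Fin 1 => b) = (fun _ : Fin 1 => a) + Pi.single i 1) ↔ b = a + 1) := by
    decide
  simp only [hd_one_iff, hammingDist_eq_zero, funC, singleC]

lemma sumFlip {n : ℕ} (y : Fin n → ZMod 2) (i0 : Fin n) :
    ∑ i, (y + Pi.single i0 1 : Fin n → ZMod 2) i = (∑ i, y i) + 1 := by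
  simp only [Pi.add_apply, Finset.sum_add_distrib]
  congr 1
  simp [Finset.sum_pi_single']

lemma single_inj {n : ℕ} {i i0 : Fin n}
    (h : (Pi.single i 1 : Fin n → ZMod 2) = Pi.single i0 1) : i = i0 := by
  by_contra hne
  have h1 := congrFun h i
  rw [Pi.single_eq_same, Pi.single_eq_of_ne hne] at h1
  exact absurd h1 (by decide)

/-- If `D'` is a linear perfect independent dominating set of `Q_n` (`n = 2^m - 1`),
then `D = {(x, y, j) : x ∈ Q_n, y ∈ D' + x, j = Σ yᵢ}` is a linear subspace of
`F_2^{2n+1}` and a perfect independent dominating set of `Q_{2n+1}`. -/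
theorem stmt2 (m n : ℕ) (hm : 2 ≤ m) (hn : n = 2 ^ m - 1)
    (D' : Set (Fin n → ZMod 2))
    (hlin : ∃ W : Submodule (ZMod 2) (Fin n → ZMod 2), (W : Set (Fin n → ZMod 2)) = D')
    (hpid : IsPID (Q n) D')
    (D : Set (Fin (n + n + 1) → ZMod 2))
    (hDdef : D = {z | ∃ x y : Fin n → ZMod 2, x + y ∈ D' ∧
      z = Fin.append (Fin.append x y) (fun _ : Fin 1 => ∑ i, y i)}) :
    (∃ W : Submodule (ZMod 2) (Fin (n + n + 1) → ZMod 2),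
      (W : Set (Fin (n + n + 1) → ZMod 2)) = D) ∧ IsPID (Q (n + n + 1)) D := by
  obtain ⟨W', hW'⟩ := hlin
  have neq2 : ∀ a b : ZMod 2, a ≠ b → a = b + 1 := by decide
  have self2 : ∀ a : ZMod 2, a ≠ a + 1 := by decide
  have add2 : ∀ a : ZMod 2, a + 1 + 1 = a := by decide
  -- membership characterization
  have memD : ∀ z, z ∈ D ↔ pA z + pB z ∈ D' ∧ pC z = ∑ i, pB z i := by
    intro z
    rw [hDdef]
    constructor
    · rintro ⟨x, y, hxy, rfl⟩
      rw [pA_append, pB_append, pC_append]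
      exact ⟨hxy, rfl⟩
    · rintro ⟨h1, h2⟩
      exact ⟨pA z, pB z, h1, by rw [← h2]; exact decomp z⟩
  refine ⟨⟨⟨⟨⟨D, ?_⟩, ?_⟩, ?_⟩, rfl⟩, ?_, ?_⟩
  · -- add_mem'
    intro z1 z2 h1 h2
    rw [memD] at h1 h2 ⊢
    have hA : pA (z1 + z2) = pA z1 + pA z2 := rfl
    have hB : pB (z1 + z2) = pB z1 + pB z2 := rfl
    have hC : pC (z1 + z2) = pC z1 + pC z2 := rfl
    constructor
    · have : pA (z1 + z2) + pB (z1 + z2) = (pA z1 + pB z1) + (pA z2 + pB z2) := by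
        rw [hA, hB]; ring
      rw [this, ← hW'] at *
      exact W'.add_mem h1.1 h2.1
    · rw [hC, hB, h1.2, h2.2]
      simp [Finset.sum_add_distrib]
  · -- zero_mem'
    rw [memD]
    have hA : pA (0 : Fin (n + n + 1) → ZMod 2) = 0 := rfl
    have hB : pB (0 : Fin (n + n + 1) → ZMod 2) = 0 := rfl
    have hC : pC (0 : Fin (n + n + 1) → ZMod 2) = 0 := rfl
    refine ⟨?_, ?_⟩
    · rw [hA, hB, add_zero, ← hW']; exact W'.zero_mem
    · rw [hC, hB]; simp
  · -- smul_mem'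
    intro c z hz
    have hc : ∀ a : ZMod 2, a = 0 ∨ a = 1 := by decide
    rcases hc c with rfl | rfl
    · rw [zero_smul]
      show (0 : Fin (n + n + 1) → ZMod 2) ∈ D
      rw [memD]
      refine ⟨?_, ?_⟩
      · show (0 : Fin n → ZMod 2) + 0 ∈ D'
        rw [add_zero, ← hW']; exact W'.zero_mem
      · show (0 : ZMod 2) = ∑ _i : Fin n, (0 : ZMod 2)
        simp
    · rw [one_smul]; exact hz
  · -- independence
    intro z hz u hu hadj
    rw [memD] at hz hu
    rw [adj3] at hadj
    rcases hadj with ⟨⟨i, hAi⟩, hB, _⟩ | ⟨hA, ⟨i, hBi⟩, hCeq⟩ | ⟨hA, hB, hC1⟩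
    · have hadj' : (Q n).Adj (pA z + pB z) (pA u + pB u) := by
        rw [adjQ]
        exact ⟨i, by rw [hAi, ← hB]; ring⟩
      exact hpid.1 _ hz.1 _ hu.1 hadj'
    · have : pC u = (∑ i, pB z i) + 1 := by
        rw [hu.2, hBi, sumFlip]
      rw [hCeq, hz.2] at this
      exact self2 _ this
    · have : pC u = pC z := by rw [hu.2, ← hB, ← hz.2]
      rw [hC1] at this
      exact self2 _ this.symm
  · -- domination
    intro z hz
    rw [memD] at hz
    push_neg at hz
    by_cases hin : pA z + pB z ∈ D'
    · -- case A : flip the parity bit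
      have hne := hz hin
      have hzC : pC z = (∑ i, pB z i) + 1 := neq2 _ _ hne
      refine ⟨Fin.append (Fin.append (pA z) (pB z)) (fun _ : Fin 1 => pC z + 1), ⟨?_, ?_⟩, ?_⟩
      · rw [memD, pA_append, pB_append, pC_append]
        exact ⟨hin, by rw [hzC, add2]⟩
      · rw [adj3, pA_append, pB_append, pC_append]
        exact Or.inr (Or.inr ⟨rfl, rfl, rfl⟩)
      · rintro u' ⟨hu'D, hu'adj⟩
        rw [memD] at hu'D
        rw [adj3] at hu'adj
        rcases hu'adj with ⟨⟨i, hAi⟩, hB, _⟩ | ⟨hA, ⟨i, hBi⟩, _⟩ | ⟨hA, hB, hC1⟩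
        · exfalso
          have hadj' : (Q n).Adj (pA z + pB z) (pA u' + pB u') := by
            rw [adjQ]; exact ⟨i, by rw [hAi, ← hB]; ring⟩
          exact hpid.1 _ hin _ hu'D.1 hadj'
        · exfalso
          have hadj' : (Q n).Adj (pA z + pB z) (pA u' + pB u') := by
            rw [adjQ]; exact ⟨i, by rw [hBi, ← hA]; ring⟩
          exact hpid.1 _ hin _ hu'D.1 hadj'
        · refine eq_of_parts _ _ ?_ ?_ ?_ <;>
            simp only [pA_append, pB_append, pC_append]
          · exact hA.symm
          · exact hB.symm
          · exact hC1
    · -- case B : use the unique dominator of pA z + pB z in D'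
      obtain ⟨w, ⟨hwD, hwadj⟩, hwuniq⟩ := hpid.2 _ hin
      rw [adjQ] at hwadj
      obtain ⟨i0, hw⟩ := hwadj
      by_cases hj : pC z = ∑ i, pB z i
      · -- flip x at i0
        refine ⟨Fin.append (Fin.append (pA z + Pi.single i0 1) (pB z)) (fun _ : Fin 1 => pC z),
          ⟨?_, ?_⟩, ?_⟩
        · rw [memD, pA_append, pB_append, pC_append]
          constructor
          · have : pA z + Pi.single i0 1 + pB z = w := by rw [hw]; ring
            rw [this]; exact hwD
          · exact hj
        · rw [adj3, pA_append, pB_append, pC_append]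
          exact Or.inl ⟨⟨i0, rfl⟩, rfl, rfl⟩
        · rintro u' ⟨hu'D, hu'adj⟩
          rw [memD] at hu'D
          rw [adj3] at hu'adj
          rcases hu'adj with ⟨⟨i, hAi⟩, hB, hCeq⟩ | ⟨hA, ⟨i, hBi⟩, hCeq⟩ | ⟨hA, hB, hC1⟩
          · have hkey : pA u' + pB u' = pA z + pB z + Pi.single i 1 := by
              rw [hAi, ← hB]; ring
            have hadj' : (Q n).Adj (pA z + pB z) (pA u' + pB u') := by
              rw [adjQ]; exact ⟨i, hkey⟩
            have := hwuniq _ ⟨hu'D.1, hadj'⟩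
            have hii : i = i0 := by
              rw [hkey, hw] at this
              exact single_inj (add_left_cancel this)
            subst hii
            refine eq_of_parts _ _ ?_ ?_ ?_ <;>
              simp only [pA_append, pB_append, pC_append]
            · rw [hAi]
            · exact hB.symm
            · exact hCeq
          · exfalso
            have : pC u' = (∑ i, pB z i) + 1 := by rw [hu'D.2, hBi, sumFlip]
            rw [hCeq, hj] at this
            exact self2 _ this
          · exfalso
            have : pA u' + pB u' = pA z + pB z := by rw [← hA, ← hB]
            rw [this] at hu'D
            exact hin hu'D.1
      · -- flip y at i0
        have hzC : pC z = (∑ i, pB z i) + 1 := neq2 _ _ hj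
        refine ⟨Fin.append (Fin.append (pA z) (pB z + Pi.single i0 1)) (fun _ : Fin 1 => pC z),
          ⟨?_, ?_⟩, ?_⟩
        · rw [memD, pA_append, pB_append, pC_append]
          constructor
          · have : pA z + (pB z + Pi.single i0 1) = w := by rw [hw]; ring
            rw [this]; exact hwD
          · rw [sumFlip]; exact hzC
        · rw [adj3, pA_append, pB_append, pC_append]
          exact Or.inr (Or.inl ⟨rfl, ⟨i0, rfl⟩, rfl⟩)
        · rintro u' ⟨hu'D, hu'adj⟩
          rw [memD] at hu'D
          rw [adj3] at hu'adj
          rcases hu'adj with ⟨⟨i, hAi⟩, hB, hCeq⟩ | ⟨hA, ⟨i, hBi⟩, hCeq⟩ | ⟨hA, hB, hC1⟩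
          · exfalso
            have : pC u' = ∑ i, pB z i := by rw [hu'D.2, ← hB]
            rw [hCeq] at this
            exact hj this
          · have hkey : pA u' + pB u' = pA z + pB z + Pi.single i 1 := by
              rw [hBi, ← hA]; ring
            have hadj' : (Q n).Adj (pA z + pB z) (pA u' + pB u') := by
              rw [adjQ]; exact ⟨i, hkey⟩
            have := hwuniq _ ⟨hu'D.1, hadj'⟩
            have hii : i = i0 := by
              rw [hkey, hw] at this
              exact single_inj (add_left_cancel this)
            subst hii
            refine eq_of_parts _ _ ?_ ?_ ?_ <;>
              simp only [pA_append, pB_append, pC_append]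
            · exact hA.symm
            · rw [hBi]
            · exact hCeq
          · exfalso
            have : pA u' + pB u' = pA z + pB z := by rw [← hA, ← hB]
            rw [this] at hu'D
            exact hin hu'D.1
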